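/- arXiv:2205.06874 — 4 statements merged into one kernel-verified Lean document; each statement's English description precedes it below -/
import Mathlib

section
/- Let M be a finite semisimple C-linear category with a non-degenerate cyclic trace θ and chosen projections/inclusions as above. Then for any objects x, y and any morphism χ: x → y, one has χ = Σ_{m∈I} Σ_{α,β} dim(m) θ_m(p^β_{y,m} ∘ χ ∘ j^α_{x,m}) j^β_{y,m} ∘ p^α_{x,m}. -/
open CategoryTheory

/-!
Let `M` be a finite semisimple `ℂ`-linear category with a non-degenerate cyclic trace
`θ` and, for objects `x, y`, chosen projections/inclusions satisfying the orthogonality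
and completeness relations.  Then every morphism `χ : x → y` satisfies
`χ = Σ_{m∈I} Σ_{α,β} dim(m)·θ_m(p^β_{y,m} ∘ χ ∘ j^α_{x,m}) · j^β_{y,m} ∘ p^α_{x,m}`.
-/
theorem morphism_expansion_in_simples
    {M : Type*} [Category M] [Preadditive M] [Linear ℂ M]
    {ι : Type*} [Fintype ι] (obj : ι → M)
    (θ : ∀ a : M, (a ⟶ a) → ℂ)
    (θ_add : ∀ {a : M} (f g : a ⟶ a), θ a (f + g) = θ a f + θ a g)
    (θ_smul : ∀ {a : M} (z : ℂ) (f : a ⟶ a), θ a (z • f) = z * θ a f)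
    (θ_cyclic : ∀ {a b : M} (f : a ⟶ b) (g : b ⟶ a), θ a (f ≫ g) = θ b (g ≫ f))
    (θ_nondeg : ∀ {a b : M} (f : a ⟶ b), (∀ g : b ⟶ a, θ a (f ≫ g) = 0) → f = 0)
    (dim_ne : ∀ i, θ (obj i) (𝟙 (obj i)) ≠ 0)
    (schur_end : ∀ (i : ι) (h : obj i ⟶ obj i), ∃ z : ℂ, h = z • 𝟙 (obj i))
    (schur_hom : ∀ i i', i ≠ i' → ∀ h : obj i ⟶ obj i', h = 0)
    (x y : M) (nx ny : ι → ℕ)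
    (px : ∀ i, Fin (nx i) → (x ⟶ obj i)) (jx : ∀ i, Fin (nx i) → (obj i ⟶ x))
    (py : ∀ i, Fin (ny i) → (y ⟶ obj i)) (jy : ∀ i, Fin (ny i) → (obj i ⟶ y))
    (orthx : ∀ i (α β : Fin (nx i)),
      jx i α ≫ px i β
        = if α = β then (θ (obj i) (𝟙 (obj i)))⁻¹ • 𝟙 (obj i) else 0)
    (orthx' : ∀ i i' (α : Fin (nx i)) (β : Fin (nx i')), i ≠ i' → jx i α ≫ px i' β = 0)
    (completex : ∑ i, ∑ α, θ (obj i) (𝟙 (obj i)) • (px i α ≫ jx i α) = 𝟙 x)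
    (orthy : ∀ i (α β : Fin (ny i)),
      jy i α ≫ py i β
        = if α = β then (θ (obj i) (𝟙 (obj i)))⁻¹ • 𝟙 (obj i) else 0)
    (orthy' : ∀ i i' (α : Fin (ny i)) (β : Fin (ny i')), i ≠ i' → jy i α ≫ py i' β = 0)
    (completey : ∑ i, ∑ α, θ (obj i) (𝟙 (obj i)) • (py i α ≫ jy i α) = 𝟙 y)
    (χ : x ⟶ y) :
    χ = ∑ i, ∑ α, ∑ β,
        (θ (obj i) (𝟙 (obj i)) * θ (obj i) (jx i α ≫ χ ≫ py i β)) • (px i α ≫ jy i β) := by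

  have key : ∀ (i : ι) (f : obj i ⟶ obj i),
      f = (θ (obj i) f / θ (obj i) (𝟙 (obj i))) • 𝟙 (obj i) := by
    intro i f
    obtain ⟨z, hz⟩ := schur_end i f
    have hθ : θ (obj i) f = z * θ (obj i) (𝟙 (obj i)) := by rw [hz, θ_smul]
    rw [hθ, mul_div_assoc, div_self (dim_ne i), mul_one]
    exact hz
  have expand : ∀ (i : ι) (g : obj i ⟶ y),
      g = ∑ β, θ (obj i) (g ≫ py i β) • jy i β := by
    intro i g
    conv_lhs => rw [← Category.comp_id g, ← completey]
    simp only [Preadditive.comp_sum, Linear.comp_smul, ← Category.assoc]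
    rw [Finset.sum_eq_single i]
    · refine Finset.sum_congr rfl fun β _ => ?_
      conv_lhs => rw [key i (g ≫ py i β)]
      simp only [Linear.smul_comp, Category.id_comp, smul_smul]
      congr 1
      rw [← mul_div_assoc]
      exact mul_div_cancel_left₀ _ (dim_ne i)
    · intro i' _ hne
      apply Finset.sum_eq_zero
      intro β _
      rw [schur_hom i i' (fun h => hne h.symm) (g ≫ py i' β), Limits.zero_comp, smul_zero]
    · intro h; exact absurd (Finset.mem_univ i) h
  conv_lhs => rw [← Category.id_comp χ, ← completex]
  simp only [Preadditive.sum_comp, Linear.smul_comp, Category.assoc]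
  refine Finset.sum_congr rfl fun i _ => Finset.sum_congr rfl fun α _ => ?_
  conv_lhs => rw [expand i (jx i α ≫ χ)]
  simp only [Preadditive.comp_sum, Linear.comp_smul, Finset.smul_sum, smul_smul, Category.assoc]
end

section
/- Let C be a pivotal fusion category and M an indecomposable finite semisimple C-module category admitting a C-module trace θ. Then any two C-module traces θ, θ' on M are proportional: there exists z ∈ C^× with θ'_m = z·θ_m for all objects m. -/
open CategoryTheory MonoidalCategory

/-- Duality data of a pivotal fusion category `C` needed to form partial traces:
left evaluation `ev^L_c : c* ⊗ c → e` and right coevaluation `coev^R_c : e → c* ⊗ c`. -/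
structure RigidData (C : Type*) [Category C] [MonoidalCategory C] where
  dual : C → C
  evL : ∀ c : C, dual c ⊗ c ⟶ 𝟙_ C
  coevR : ∀ c : C, 𝟙_ C ⟶ dual c ⊗ c

/-- The structure of a `C`-module category on `M`: an action bifunctor together with
the coherence isomorphisms `c_{x,y,m} : (x ⊗ y) ▷ m ≅ x ▷ (y ▷ m)` and
`γ_m : e ▷ m ≅ m`. -/
structure CModuleData (C : Type*) [Category C] [MonoidalCategory C]
    (M : Type*) [Category M] where
  R : RigidData C
  act : C → M → M
  actHom : ∀ {c c' : C} {m m' : M}, (c ⟶ c') → (m ⟶ m') → (act c m ⟶ act c' m')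
  actHom_id : ∀ (c : C) (m : M), actHom (𝟙 c) (𝟙 m) = 𝟙 (act c m)
  actHom_comp : ∀ {c₁ c₂ c₃ : C} {m₁ m₂ m₃ : M} (f : c₁ ⟶ c₂) (f' : c₂ ⟶ c₃)
      (g : m₁ ⟶ m₂) (g' : m₂ ⟶ m₃),
    actHom (f ≫ f') (g ≫ g') = actHom f g ≫ actHom f' g'
  assocL : ∀ (c c' : C) (m : M), act (c ⊗ c') m ≅ act c (act c' m)
  unitL : ∀ m : M, act (𝟙_ C) m ≅ m

variable {C : Type*} [Category C] [MonoidalCategory C]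
variable {M : Type*} [Category M]

/-- The partial trace `tr^C(α) : m → m` of `α : c ▷ m → c ▷ m`,
`tr^C(α) = (ev^L_c ▷ 1_m) ∘ c⁻¹_{c*,c,m} ∘ (1_{c*} ▷ α) ∘ c_{c*,c,m} ∘ (coev^R_c ▷ 1_m)`. -/
def CModuleData.partialTr (B : CModuleData C M) (c : C) {m : M}
    (α : B.act c m ⟶ B.act c m) : m ⟶ m :=
  (B.unitL m).inv ≫ B.actHom (B.R.coevR c) (𝟙 m) ≫ (B.assocL (B.R.dual c) c m).hom
    ≫ B.actHom (𝟙 (B.R.dual c)) α ≫ (B.assocL (B.R.dual c) c m).inv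
    ≫ B.actHom (B.R.evL c) (𝟙 m) ≫ (B.unitL m).hom

/-- A `C`-module trace on `M`: a cyclic non-degenerate `ℂ`-linear trace satisfying the
partial trace condition `θ_{c▷m}(α) = θ_m(tr^C(α))`. -/
structure IsModuleTrace [Preadditive M] [Linear ℂ M] (B : CModuleData C M)
    (θ : ∀ m : M, (m ⟶ m) → ℂ) : Prop where
  add : ∀ {m : M} (f g : m ⟶ m), θ m (f + g) = θ m f + θ m g
  smul : ∀ {m : M} (z : ℂ) (f : m ⟶ m), θ m (z • f) = z * θ m f
  cyclic : ∀ {m m' : M} (f : m ⟶ m') (g : m' ⟶ m), θ m (f ≫ g) = θ m' (g ≫ f)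
  nondeg : ∀ {m m' : M} (f : m ⟶ m'), (∀ g : m' ⟶ m, θ m (f ≫ g) = 0) → f = 0
  moduleTr : ∀ (c : C) (m : M) (α : B.act c m ⟶ B.act c m),
    θ (B.act c m) α = θ m (B.partialTr c α)


section Helpers
variable {C : Type*} [Category C] [MonoidalCategory C]
variable {M : Type*} [Category M] [Preadditive M] [Linear ℂ M]

lemma trace_zero' (B : CModuleData C M) {θ : ∀ m : M, (m ⟶ m) → ℂ}
    (hθ : IsModuleTrace B θ) (m : M) : θ m 0 = 0 := by
  have := hθ.smul 0 (0 : m ⟶ m)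
  simpa using this

lemma trace_sum' (B : CModuleData C M) {θ : ∀ m : M, (m ⟶ m) → ℂ}
    (hθ : IsModuleTrace B θ) (m : M) {ι : Type*} (s : Finset ι) (f : ι → (m ⟶ m)) :
    θ m (∑ k ∈ s, f k) = ∑ k ∈ s, θ m (f k) := by
  classical
  induction s using Finset.cons_induction with
  | empty => simpa using trace_zero' B hθ m
  | cons a s ha ih => rw [Finset.sum_cons, Finset.sum_cons, hθ.add, ih]

end Helpers

/-!
Let `C` be a pivotal fusion category and `M` an indecomposable finite semisimple
`C`-module category admitting a `C`-module trace.  (Semisimplicity is encoded by the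
simple objects `obj i`, Schur's lemma for them, and the decomposition of every object
into simples; indecomposability by the condition that no proper nonempty set of simples
is closed under the `C`-action.)  Then any two `C`-module traces `θ, θ'` on `M` are
proportional: there exists `z ∈ ℂˣ` with `θ'_m = z·θ_m` for all objects `m`.
-/
theorem module_trace_unique_up_to_scalar
    [Preadditive M] [Linear ℂ M]
    (B : CModuleData C M)
    {ιM : Type*} [Fintype ιM] (obj : ιM → M)
    (schur_end : ∀ (i : ιM) (h : obj i ⟶ obj i), ∃ z : ℂ, h = z • 𝟙 (obj i))
    (id_ne : ∀ i, 𝟙 (obj i) ≠ 0)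
    (schur_hom : ∀ i i', i ≠ i' → ∀ h : obj i ⟶ obj i', h = 0)
    (hsemisimple : ∀ x : M, ∃ (n : ιM → ℕ) (p : ∀ i, Fin (n i) → (x ⟶ obj i))
        (j : ∀ i, Fin (n i) → (obj i ⟶ x)),
      (∀ i (α β : Fin (n i)), j i α ≫ p i β = if α = β then 𝟙 (obj i) else 0) ∧
      (∀ i i' (α : Fin (n i)) (β : Fin (n i')), i ≠ i' → j i α ≫ p i' β = 0) ∧
      (∑ i, ∑ α, p i α ≫ j i α) = 𝟙 x)
    (hindec : ∀ S : Set ιM,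
      (∀ i ∈ S, ∀ k, k ∉ S → ∀ (c : C) (f : B.act c (obj i) ⟶ obj k), f = 0) →
      S = ∅ ∨ S = Set.univ)
    (θ θ' : ∀ m : M, (m ⟶ m) → ℂ)
    (hθ : IsModuleTrace B θ) (hθ' : IsModuleTrace B θ') :
    ∃ z : ℂ, z ≠ 0 ∧ ∀ (m : M) (h : m ⟶ m), θ' m h = z * θ m h := by
  classical
  -- nondegeneracy on simples
  have hd : ∀ (θ₀ : ∀ m : M, (m ⟶ m) → ℂ), IsModuleTrace B θ₀ → ∀ i,
      θ₀ (obj i) (𝟙 (obj i)) ≠ 0 := by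
    intro θ₀ hθ₀ i hzero
    apply id_ne i
    apply hθ₀.nondeg
    intro g
    obtain ⟨w, hw⟩ := schur_end i g
    rw [Category.id_comp, hw, hθ₀.smul, hzero, mul_zero]
  by_cases hne : Nonempty ιM
  · obtain ⟨i0⟩ := hne
    -- key relation
    have key : ∀ (c : C) (i k : ιM), (∃ f : B.act c (obj i) ⟶ obj k, f ≠ 0) →
        θ' (obj k) (𝟙 _) * θ (obj i) (𝟙 _) = θ' (obj i) (𝟙 _) * θ (obj k) (𝟙 _) := by
      rintro c i k ⟨f, hf⟩
      obtain ⟨n, p, j, hjp, hjp', hsum⟩ := hsemisimple (B.act c (obj i))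
      have hnk : n k ≠ 0 := by
        intro h0
        apply hf
        have hfe : f = (∑ i', ∑ αx, p i' αx ≫ j i' αx) ≫ f := by
          rw [hsum, Category.id_comp]
        rw [hfe, Preadditive.sum_comp]
        refine Finset.sum_eq_zero fun i' _ => ?_
        rw [Preadditive.sum_comp]
        refine Finset.sum_eq_zero fun αx _ => ?_
        rw [Category.assoc]
        by_cases hik : i' = k
        · subst hik
          exact absurd αx.isLt (by omega)
        · rw [schur_hom i' k hik (j i' αx ≫ f), Limits.comp_zero]
      set β : Fin (n k) := ⟨0, Nat.pos_of_ne_zero hnk⟩ with hβ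
      set α0 : B.act c (obj i) ⟶ B.act c (obj i) := p k β ≫ j k β with hα0
      obtain ⟨lam, hlam⟩ := schur_end i (B.partialTr c α0)
      have keyθ : ∀ (θ₀ : ∀ m : M, (m ⟶ m) → ℂ), IsModuleTrace B θ₀ →
          θ₀ (obj k) (𝟙 _) = lam * θ₀ (obj i) (𝟙 _) := by
        intro θ₀ hθ₀
        have h1 : θ₀ (B.act c (obj i)) α0 = θ₀ (obj k) (𝟙 (obj k)) := by
          rw [hα0, hθ₀.cyclic (p k β) (j k β), hjp k β β, if_pos rfl]
        have h2 : θ₀ (B.act c (obj i)) α0 = lam * θ₀ (obj i) (𝟙 (obj i)) := by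
          rw [hθ₀.moduleTr c (obj i) α0, hlam, hθ₀.smul]
        rw [← h1, h2]
      rw [keyθ θ' hθ', keyθ θ hθ]
      ring
    set S : Set ιM := {i | θ' (obj i) (𝟙 _) * θ (obj i0) (𝟙 _)
        = θ' (obj i0) (𝟙 _) * θ (obj i) (𝟙 _)} with hS
    have hSclosed : ∀ i ∈ S, ∀ k, k ∉ S →
        ∀ (c : C) (f : B.act c (obj i) ⟶ obj k), f = 0 := by
      intro i hi k hk c f
      by_contra hf
      apply hk
      have hkey := key c i k ⟨f, hf⟩
      have hi' : θ' (obj i) (𝟙 _) * θ (obj i0) (𝟙 _)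
          = θ' (obj i0) (𝟙 _) * θ (obj i) (𝟙 _) := hi
      show θ' (obj k) (𝟙 _) * θ (obj i0) (𝟙 _) = θ' (obj i0) (𝟙 _) * θ (obj k) (𝟙 _)
      apply mul_right_cancel₀ (hd θ hθ i)
      calc θ' (obj k) (𝟙 _) * θ (obj i0) (𝟙 _) * θ (obj i) (𝟙 _)
          = (θ' (obj k) (𝟙 _) * θ (obj i) (𝟙 _)) * θ (obj i0) (𝟙 _) := by ring
        _ = (θ' (obj i) (𝟙 _) * θ (obj k) (𝟙 _)) * θ (obj i0) (𝟙 _) := by rw [hkey]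
        _ = (θ' (obj i) (𝟙 _) * θ (obj i0) (𝟙 _)) * θ (obj k) (𝟙 _) := by ring
        _ = (θ' (obj i0) (𝟙 _) * θ (obj i) (𝟙 _)) * θ (obj k) (𝟙 _) := by rw [hi']
        _ = θ' (obj i0) (𝟙 _) * θ (obj k) (𝟙 _) * θ (obj i) (𝟙 _) := by ring
    have hSuniv : S = Set.univ := by
      rcases hindec S hSclosed with h | h
      · have : i0 ∈ S := rfl
        rw [h] at this
        exact this.elim
      · exact h
    set z : ℂ := θ' (obj i0) (𝟙 _) / θ (obj i0) (𝟙 _) with hz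
    have hz0 : z ≠ 0 := div_ne_zero (hd θ' hθ' i0) (hd θ hθ i0)
    have hzi : ∀ i, θ' (obj i) (𝟙 _) = z * θ (obj i) (𝟙 _) := by
      intro i
      have hi : i ∈ S := hSuniv ▸ Set.mem_univ i
      have hi' : θ' (obj i) (𝟙 _) * θ (obj i0) (𝟙 _)
          = θ' (obj i0) (𝟙 _) * θ (obj i) (𝟙 _) := hi
      have h0 := hd θ hθ i0
      rw [hz]
      field_simp
      linear_combination hi'
    refine ⟨z, hz0, fun m h => ?_⟩
    obtain ⟨n, p, j, hjp, hjp', hsum⟩ := hsemisimple m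
    choose w hw using fun i (αx : Fin (n i)) => schur_end i (j i αx ≫ h ≫ p i αx)
    have expand : ∀ (θ₀ : ∀ m : M, (m ⟶ m) → ℂ), IsModuleTrace B θ₀ →
        θ₀ m h = ∑ i, ∑ αx, w i αx * θ₀ (obj i) (𝟙 _) := by
      intro θ₀ hθ₀
      have hdecomp : h = ∑ i, ∑ αx, h ≫ p i αx ≫ j i αx := by
        conv_lhs => rw [← Category.comp_id h, ← hsum]
        rw [Preadditive.comp_sum]
        exact Finset.sum_congr rfl fun i _ => by rw [Preadditive.comp_sum]
      rw [hdecomp, trace_sum' B hθ₀]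
      refine Finset.sum_congr rfl fun i _ => ?_
      rw [trace_sum' B hθ₀]
      refine Finset.sum_congr rfl fun αx _ => ?_
      rw [← Category.assoc, hθ₀.cyclic, hw, hθ₀.smul]
    rw [expand θ' hθ', expand θ hθ, Finset.mul_sum]
    refine Finset.sum_congr rfl fun i _ => ?_
    rw [Finset.mul_sum]
    refine Finset.sum_congr rfl fun αx _ => ?_
    rw [hzi i]
    ring
  · haveI : IsEmpty ιM := not_nonempty_iff.mp hne
    refine ⟨1, one_ne_zero, fun m h => ?_⟩
    obtain ⟨n, p, j, _, _, hsum⟩ := hsemisimple m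
    have hid : (𝟙 m : m ⟶ m) = 0 := by
      rw [← hsum]
      simp
    have h0 : h = 0 := by rw [← Category.comp_id h, hid, Limits.comp_zero]
    rw [h0, trace_zero' B hθ' m, trace_zero' B hθ m, mul_zero]
end

section
/- Let C be a pivotal fusion category and M, N finite semisimple C-module categories with C-module traces θ^M, θ^N. Let F: M → N be a C-module functor with left adjoint F^l, counit ε^F: F^l F ⇒ id and modified unit η'^F: id ⇒ F^l F built from the pivotal structure ω^F: F^{ll} ⇒ F. Then for every object m of M and every endomorphism α: F(m) → F(m), θ^M_m(ε^F_m ∘ F^l(α) ∘ η'^F_m) = θ^N_{F(m)}(α). -/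
open CategoryTheory

/-!
Let `C` be a pivotal fusion category and `M, N` finite semisimple `C`-module categories
with `C`-module traces `θ^M, θ^N`.  Let `F : M → N` be a (`C`-module) functor with left
adjoint `F^l` (counit `ε^F : F^l F ⇒ id`), `F^{ll}` a left adjoint of `F^l` (counit
`ε^{F^l}`, unit `η^{F^l}`), and `ω^F : F^{ll} ≅ F` the pivotal structure characterized by
`θ^M_{F^l n}(β ∘ ε^F_m ∘ F^l α) = θ^N_n(ε^{F^l}_n ∘ F^{ll} β ∘ (ω^F)⁻¹_m ∘ α)`.
With the modified unit `η'^F := F^l ω^F ∘ η^{F^l}` one has, for every object `m` of `M`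
and every endomorphism `α : F(m) → F(m)`:
`θ^M_m(ε^F_m ∘ F^l(α) ∘ η'^F_m) = θ^N_{F(m)}(α)`.
-/
theorem module_functor_trace_compatibility
    {M N : Type*} [Category M] [Category N]
    (θM : ∀ a : M, (a ⟶ a) → ℂ) (θN : ∀ a : N, (a ⟶ a) → ℂ)
    (θM_cyclic : ∀ {a b : M} (f : a ⟶ b) (g : b ⟶ a), θM a (f ≫ g) = θM b (g ≫ f))
    (θN_cyclic : ∀ {a b : N} (f : a ⟶ b) (g : b ⟶ a), θN a (f ≫ g) = θN b (g ≫ f))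
    (F : M ⥤ N) (Fl : N ⥤ M) (Fll : M ⥤ N)
    (adj : Fl ⊣ F) (adj2 : Fll ⊣ Fl)
    (ω : Fll ≅ F)
    (hpiv : ∀ {m : M} {n : N} (α : n ⟶ F.obj m) (β : m ⟶ Fl.obj n),
      θM (Fl.obj n) (Fl.map α ≫ adj.counit.app m ≫ β)
        = θN n (α ≫ ω.inv.app m ≫ Fll.map β ≫ adj2.counit.app n)) :
    ∀ (m : M) (α : F.obj m ⟶ F.obj m),
      θM m ((adj2.unit.app m ≫ Fl.map (ω.hom.app m)) ≫ Fl.map α ≫ adj.counit.app m)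
        = θN (F.obj m) α := by
  intro m α
  have h := θM_cyclic (adj2.unit.app m ≫ Fl.map (ω.hom.app m))
    (Fl.map α ≫ adj.counit.app m)
  simp only [Functor.id_obj] at h
  rw [h]
  have h2 := hpiv α (adj2.unit.app m ≫ Fl.map (ω.hom.app m))
  rw [Category.assoc, h2]
  congr 1
  rw [Fll.map_comp, Category.assoc, ← Functor.comp_map Fl Fll, adj2.counit.naturality (ω.hom.app m),
    adj2.left_triangle_components_assoc, Functor.id_map, ω.inv_hom_id_app, Category.comp_id]
end

section
/- Let C, D be pivotal fusion categories and M a finite semisimple (C,D)-bimodule category. Define the opposite bimodule category M^# to be M^op with actions d ▷^op m := m ◁ d* and m ◁^op c := c* ▷ m. Then the identity functor together with coherence isomorphisms given by the pivots (s_{c,m} = ω_c ▷ id_m, t_{m,d} = id_m ◁ ω⁻¹_d) is an equivalence of (C,D)-bimodule categories Ω: M^{##} → M. -/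
open CategoryTheory MonoidalCategory

/-- Pivotal duality data on a fusion category: duals, duality on morphisms, the pivotal
isomorphism `ω : (−)** ⇒ id` with its naturality, the canonical identifications
`(x ⊗ y)* ≅ y* ⊗ x*` and `e* ≅ e`, and the monoidality of `ω` expressed through them. -/
structure PivData (C : Type*) [Category C] [MonoidalCategory C] where
  dual : C → C
  dualMap : ∀ {x y : C}, (x ⟶ y) → (dual y ⟶ dual x)
  dualMap_id : ∀ x : C, dualMap (𝟙 x) = 𝟙 (dual x)
  dualMap_comp : ∀ {x y z : C} (f : x ⟶ y) (g : y ⟶ z),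
    dualMap (f ≫ g) = dualMap g ≫ dualMap f
  pivot : ∀ x : C, dual (dual x) ≅ x
  pivot_natural : ∀ {x y : C} (f : x ⟶ y),
    dualMap (dualMap f) ≫ (pivot y).hom = (pivot x).hom ≫ f
  μ : ∀ x y : C, dual (x ⊗ y) ≅ dual y ⊗ dual x
  μ₀ : dual (𝟙_ C) ≅ 𝟙_ C
  pivot_tensor : ∀ x y : C,
    (pivot (x ⊗ y)).hom
      = dualMap (μ x y).inv ≫ (μ (dual y) (dual x)).hom
          ≫ ((pivot x).hom ⊗ₘ (pivot y).hom)
  pivot_unit : (pivot (𝟙_ C)).hom = dualMap μ₀.inv ≫ μ₀.hom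

namespace PivData

variable {C : Type*} [Category C] [MonoidalCategory C]

/-- The double dual `x**`. -/
def ddual (P : PivData C) (x : C) : C := P.dual (P.dual x)

/-- The double dual of a morphism. -/
def ddualMap (P : PivData C) {x y : C} (f : x ⟶ y) : P.ddual x ⟶ P.ddual y :=
  P.dualMap (P.dualMap f)

/-- The canonical identification `(x ⊗ y)** ⟶ x** ⊗ y**`. -/
def ddμ (P : PivData C) (x y : C) : P.ddual (x ⊗ y) ⟶ P.ddual x ⊗ P.ddual y :=
  P.dualMap (P.μ x y).inv ≫ (P.μ (P.dual y) (P.dual x)).hom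

/-- The canonical identification `x** ⊗ y** ⟶ (x ⊗ y)**`. -/
def ddμinv (P : PivData C) (x y : C) : P.ddual x ⊗ P.ddual y ⟶ P.ddual (x ⊗ y) :=
  (P.μ (P.dual y) (P.dual x)).inv ≫ P.dualMap (P.μ x y).hom

/-- The canonical identification `e** ⟶ e`. -/
def ddμ₀ (P : PivData C) : P.ddual (𝟙_ C) ⟶ 𝟙_ C :=
  P.dualMap P.μ₀.inv ≫ P.μ₀.hom

end PivData

/-- The data of a `(C,D)`-bimodule category on `M`: left and right action bifunctors
with the coherence isomorphisms `c`, `γ`, `d`, `δ`, `b` of Definition 2.1,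
their naturality, and the pentagon/triangle coherence axioms. -/
structure BimodCat (C : Type*) [Category C] [MonoidalCategory C]
    (D : Type*) [Category D] [MonoidalCategory D]
    (M : Type*) [Category M] where
  act : C → M → M
  actHom : ∀ {c c' : C} {m m' : M}, (c ⟶ c') → (m ⟶ m') → (act c m ⟶ act c' m')
  actHom_id : ∀ (c : C) (m : M), actHom (𝟙 c) (𝟙 m) = 𝟙 (act c m)
  actHom_comp : ∀ {c₁ c₂ c₃ : C} {m₁ m₂ m₃ : M} (f : c₁ ⟶ c₂) (f' : c₂ ⟶ c₃)
      (g : m₁ ⟶ m₂) (g' : m₂ ⟶ m₃),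
    actHom (f ≫ f') (g ≫ g') = actHom f g ≫ actHom f' g'
  ract : M → D → M
  ractHom : ∀ {m m' : M} {d d' : D}, (m ⟶ m') → (d ⟶ d') → (ract m d ⟶ ract m' d')
  ractHom_id : ∀ (m : M) (d : D), ractHom (𝟙 m) (𝟙 d) = 𝟙 (ract m d)
  ractHom_comp : ∀ {m₁ m₂ m₃ : M} {d₁ d₂ d₃ : D} (g : m₁ ⟶ m₂) (g' : m₂ ⟶ m₃)
      (f : d₁ ⟶ d₂) (f' : d₂ ⟶ d₃),
    ractHom (g ≫ g') (f ≫ f') = ractHom g f ≫ ractHom g' f'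
  assocL : ∀ (x y : C) (m : M), act (x ⊗ y) m ≅ act x (act y m)
  assocL_natural : ∀ {x x' y y' : C} {m m' : M} (f : x ⟶ x') (f' : y ⟶ y')
      (g : m ⟶ m'),
    actHom (f ⊗ₘ f') g ≫ (assocL x' y' m').hom = (assocL x y m).hom ≫ actHom f (actHom f' g)
  unitL : ∀ m : M, act (𝟙_ C) m ≅ m
  unitL_natural : ∀ {m m' : M} (g : m ⟶ m'),
    actHom (𝟙 (𝟙_ C)) g ≫ (unitL m').hom = (unitL m).hom ≫ g
  assocR : ∀ (m : M) (x y : D), ract (ract m x) y ≅ ract m (x ⊗ y)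
  assocR_natural : ∀ {m m' : M} {x x' y y' : D} (g : m ⟶ m') (f : x ⟶ x')
      (f' : y ⟶ y'),
    ractHom (ractHom g f) f' ≫ (assocR m' x' y').hom = (assocR m x y).hom ≫ ractHom g (f ⊗ₘ f')
  unitR : ∀ m : M, ract m (𝟙_ D) ≅ m
  unitR_natural : ∀ {m m' : M} (g : m ⟶ m'),
    ractHom g (𝟙 (𝟙_ D)) ≫ (unitR m').hom = (unitR m).hom ≫ g
  middle : ∀ (c : C) (m : M) (d : D), ract (act c m) d ≅ act c (ract m d)
  middle_natural : ∀ {c c' : C} {m m' : M} {d d' : D} (f : c ⟶ c') (g : m ⟶ m')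
      (h : d ⟶ d'),
    ractHom (actHom f g) h ≫ (middle c' m' d').hom = (middle c m d).hom ≫ actHom f (ractHom g h)
  pentagonL : ∀ (x y z : C) (m : M),
    (assocL (x ⊗ y) z m).hom ≫ (assocL x y (act z m)).hom
      = actHom (α_ x y z).hom (𝟙 m) ≫ (assocL x (y ⊗ z) m).hom
          ≫ actHom (𝟙 x) ((assocL y z m).hom)
  triangleL : ∀ (x : C) (m : M),
    (assocL x (𝟙_ C) m).hom ≫ actHom (𝟙 x) ((unitL m).hom) = actHom (ρ_ x).hom (𝟙 m)
  pentagonR : ∀ (m : M) (x y z : D),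
    (assocR (ract m x) y z).hom ≫ (assocR m x (y ⊗ z)).hom
      = ractHom ((assocR m x y).hom) (𝟙 z) ≫ (assocR m (x ⊗ y) z).hom
          ≫ ractHom (𝟙 m) (α_ x y z).hom
  triangleR : ∀ (m : M) (x : D),
    ractHom ((unitR m).hom) (𝟙 x)
      = (assocR m (𝟙_ D) x).hom ≫ ractHom (𝟙 m) (λ_ x).hom
  pentagonMix₁ : ∀ (x y : C) (m : M) (u : D),
    (middle (x ⊗ y) m u).hom ≫ (assocL x y (ract m u)).hom
      = ractHom ((assocL x y m).hom) (𝟙 u) ≫ (middle x (act y m) u).hom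
          ≫ actHom (𝟙 x) ((middle y m u).hom)
  pentagonMix₂ : ∀ (x : C) (m : M) (u v : D),
    (assocR (act x m) u v).hom ≫ (middle x m (u ⊗ v)).hom
      = ractHom ((middle x m u).hom) (𝟙 v) ≫ (middle x (ract m u) v).hom
          ≫ actHom (𝟙 x) ((assocR m u v).hom)

namespace BimodCat

variable {C : Type*} [Category C] [MonoidalCategory C]
variable {D : Type*} [Category D] [MonoidalCategory D]
variable {M : Type*} [Category M]

/-- The coherence isomorphism `c^{##}_{x,y,m}` of the double-opposite bimodule category
`M^{##}`, whose left action is `x ▷^{##} m = x** ▷ m`. -/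
def ddAssocL (B : BimodCat C D M) (P : PivData C) (x y : C) (m : M) :
    B.act (P.ddual (x ⊗ y)) m ⟶ B.act (P.ddual x) (B.act (P.ddual y) m) :=
  B.actHom (P.ddμ x y) (𝟙 m) ≫ (B.assocL (P.ddual x) (P.ddual y) m).hom

/-- The unit coherence `γ^{##}_m` of `M^{##}`. -/
def ddUnitL (B : BimodCat C D M) (P : PivData C) (m : M) :
    B.act (P.ddual (𝟙_ C)) m ⟶ m :=
  B.actHom P.ddμ₀ (𝟙 m) ≫ (B.unitL m).hom

/-- The coherence isomorphism `d^{##}_{m,x,y}` of `M^{##}`, whose right action is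
`m ◁^{##} d = m ◁ d**`. -/
def ddAssocR (B : BimodCat C D M) (P : PivData D) (m : M) (x y : D) :
    B.ract (B.ract m (P.ddual x)) (P.ddual y) ⟶ B.ract m (P.ddual (x ⊗ y)) :=
  (B.assocR m (P.ddual x) (P.ddual y)).hom ≫ B.ractHom (𝟙 m) (P.ddμinv x y)

/-- The unit coherence `δ^{##}_m` of `M^{##}`. -/
def ddUnitR (B : BimodCat C D M) (P : PivData D) (m : M) :
    B.ract m (P.ddual (𝟙_ D)) ⟶ m :=
  B.ractHom (𝟙 m) P.ddμ₀ ≫ (B.unitR m).hom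

/-- The coherence isomorphism `s_{x,m} = ω_x ▷ 1_m` of the identity functor
`Ω : M^{##} → M`. -/
def sΩ (B : BimodCat C D M) (P : PivData C) (x : C) (m : M) :
    B.act (P.ddual x) m ⟶ B.act x m :=
  B.actHom (P.pivot x).hom (𝟙 m)

/-- The coherence isomorphism `t_{m,d} = 1_m ◁ ω⁻¹_d` of the identity functor
`Ω : M^{##} → M`. -/
def tΩ (B : BimodCat C D M) (P : PivData D) (m : M) (d : D) :
    B.ract m d ⟶ B.ract m (P.ddual d) :=
  B.ractHom (𝟙 m) (P.pivot d).inv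

end BimodCat

/-
`Ω` is the identity functor, so each of its axioms is a naturality square of a coherence
isomorphism of `M` evaluated at pivots. Beyond bifunctoriality of the actions, the only input is
monoidality of `ω`: `ω_{x ⊗ y} = (ω_x ⊗ ω_y) ∘ ((x ⊗ y)** ≅ x** ⊗ y**)` and `ω_e = (e** ≅ e)`,
and these canonical identifications are exactly the ones built into the coherence data of `M^{##}`.
-/

attribute [reducible] PivData.ddual

namespace PivData

variable {C : Type*} [Category C] [MonoidalCategory C] (P : PivData C)

lemma ddualMap_comp_pivot_hom {x y : C} (f : x ⟶ y) :
    P.ddualMap f ≫ (P.pivot y).hom = (P.pivot x).hom ≫ f :=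
  P.pivot_natural f

lemma comp_pivot_inv {x y : C} (f : x ⟶ y) :
    f ≫ (P.pivot y).inv = (P.pivot x).inv ≫ P.ddualMap f := by
  rw [Iso.eq_inv_comp, ← Category.assoc, ← ddualMap_comp_pivot_hom, Category.assoc,
    Iso.hom_inv_id, Category.comp_id]

lemma pivot_tensor_hom (x y : C) :
    (P.pivot (x ⊗ y)).hom = P.ddμ x y ≫ ((P.pivot x).hom ⊗ₘ (P.pivot y).hom) := by
  rw [P.pivot_tensor, ddμ, Category.assoc]

lemma pivot_unit_hom : (P.pivot (𝟙_ C)).hom = P.ddμ₀ :=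
  P.pivot_unit

lemma ddμ_comp_ddμinv (x y : C) : P.ddμ x y ≫ P.ddμinv x y = 𝟙 _ := by
  rw [ddμ, ddμinv, Category.assoc, Iso.hom_inv_id_assoc, ← P.dualMap_comp, Iso.hom_inv_id,
    P.dualMap_id]

lemma pivot_tensor_inv (x y : C) :
    (P.pivot (x ⊗ y)).inv = ((P.pivot x).inv ⊗ₘ (P.pivot y).inv) ≫ P.ddμinv x y := by
  refine Iso.inv_ext ?_
  rw [pivot_tensor_hom, Category.assoc, tensorHom_comp_tensorHom_assoc, Iso.hom_inv_id,
    Iso.hom_inv_id, id_tensorHom_id, Category.id_comp, ddμ_comp_ddμinv]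

end PivData

namespace BimodCat

variable {C : Type*} [Category C] [MonoidalCategory C]
variable {D : Type*} [Category D] [MonoidalCategory D]
variable {M : Type*} [Category M] (B : BimodCat C D M)

lemma actHom_comp_actHom {c₁ c₂ c₃ : C} {m₁ m₂ m₃ : M} (f : c₁ ⟶ c₂) (f' : c₂ ⟶ c₃)
    (g : m₁ ⟶ m₂) (g' : m₂ ⟶ m₃) :
    B.actHom f g ≫ B.actHom f' g' = B.actHom (f ≫ f') (g ≫ g') :=
  (B.actHom_comp f f' g g').symm

lemma ractHom_comp_ractHom {m₁ m₂ m₃ : M} {d₁ d₂ d₃ : D} (g : m₁ ⟶ m₂) (g' : m₂ ⟶ m₃)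
    (f : d₁ ⟶ d₂) (f' : d₂ ⟶ d₃) :
    B.ractHom g f ≫ B.ractHom g' f' = B.ractHom (g ≫ g') (f ≫ f') :=
  (B.ractHom_comp g g' f f').symm

lemma ractHom_comp_ractHom_assoc {m₁ m₂ m₃ : M} {d₁ d₂ d₃ : D} (g : m₁ ⟶ m₂) (g' : m₂ ⟶ m₃)
    (f : d₁ ⟶ d₂) (f' : d₂ ⟶ d₃) {n : M} (h : B.ract m₃ d₃ ⟶ n) :
    B.ractHom g f ≫ B.ractHom g' f' ≫ h = B.ractHom (g ≫ g') (f ≫ f') ≫ h := by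
  rw [← Category.assoc, ractHom_comp_ractHom]

lemma actHom_comp_id {c₁ c₂ c₃ : C} (f : c₁ ⟶ c₂) (f' : c₂ ⟶ c₃) (m : M) :
    B.actHom (f ≫ f') (𝟙 m) = B.actHom f (𝟙 m) ≫ B.actHom f' (𝟙 m) := by
  rw [actHom_comp_actHom, Category.comp_id]

lemma ractHom_id_comp {d₁ d₂ d₃ : D} (m : M) (f : d₁ ⟶ d₂) (f' : d₂ ⟶ d₃) :
    B.ractHom (𝟙 m) (f ≫ f') = B.ractHom (𝟙 m) f ≫ B.ractHom (𝟙 m) f' := by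
  rw [ractHom_comp_ractHom, Category.comp_id]

lemma middle_natural_left {c c' : C} (f : c ⟶ c') (m : M) (d : D) :
    (B.middle c m d).hom ≫ B.actHom f (𝟙 (B.ract m d))
      = B.ractHom (B.actHom f (𝟙 m)) (𝟙 d) ≫ (B.middle c' m d).hom := by
  rw [B.middle_natural, ractHom_id]

lemma middle_natural_right (c : C) (m : M) {d d' : D} (h : d ⟶ d') :
    B.ractHom (𝟙 (B.act c m)) h ≫ (B.middle c m d').hom
      = (B.middle c m d).hom ≫ B.actHom (𝟙 c) (B.ractHom (𝟙 m) h) := by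
  rw [← B.middle_natural, actHom_id]

lemma isIso_actHom {c c' : C} {m m' : M} (f : c ⟶ c') (g : m ⟶ m') [IsIso f] [IsIso g] :
    IsIso (B.actHom f g) :=
  ⟨B.actHom (inv f) (inv g), by simp [actHom_comp_actHom, actHom_id],
    by simp [actHom_comp_actHom, actHom_id]⟩

lemma isIso_ractHom {m m' : M} {d d' : D} (g : m ⟶ m') (f : d ⟶ d') [IsIso g] [IsIso f] :
    IsIso (B.ractHom g f) :=
  ⟨B.ractHom (inv g) (inv f), by simp [ractHom_comp_ractHom, ractHom_id],
    by simp [ractHom_comp_ractHom, ractHom_id]⟩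

variable (PC : PivData C) (PD : PivData D)

lemma isIso_sΩ (x : C) (m : M) : IsIso (B.sΩ PC x m) :=
  B.isIso_actHom (PC.pivot x).hom (𝟙 m)

lemma isIso_tΩ (m : M) (d : D) : IsIso (B.tΩ PD m d) :=
  B.isIso_ractHom (𝟙 m) (PD.pivot d).inv

lemma sΩ_naturality {x y : C} {m m' : M} (f : x ⟶ y) (g : m ⟶ m') :
    B.actHom (PC.ddualMap f) g ≫ B.sΩ PC y m' = B.sΩ PC x m ≫ B.actHom f g := by
  rw [sΩ, sΩ, actHom_comp_actHom, actHom_comp_actHom, PC.ddualMap_comp_pivot_hom,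
    Category.comp_id, Category.id_comp]

lemma tΩ_naturality {m m' : M} {x y : D} (g : m ⟶ m') (f : x ⟶ y) :
    B.ractHom g f ≫ B.tΩ PD m' y = B.tΩ PD m x ≫ B.ractHom g (PD.ddualMap f) := by
  rw [tΩ, tΩ, ractHom_comp_ractHom, ractHom_comp_ractHom, PD.comp_pivot_inv,
    Category.comp_id, Category.id_comp]

lemma sΩ_associativity (x y : C) (m : M) :
    B.sΩ PC (x ⊗ y) m ≫ (B.assocL x y m).hom
      = B.ddAssocL PC x y m ≫ B.sΩ PC x (B.act (PC.ddual y) m)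
          ≫ B.actHom (𝟙 x) (B.sΩ PC y m) := by
  rw [sΩ, sΩ, sΩ, ddAssocL, PC.pivot_tensor_hom, actHom_comp_id, Category.assoc,
    B.assocL_natural, Category.assoc, actHom_comp_actHom, Category.comp_id, Category.id_comp]

lemma sΩ_unitality (m : M) : B.sΩ PC (𝟙_ C) m ≫ (B.unitL m).hom = B.ddUnitL PC m := by
  rw [sΩ, ddUnitL, PC.pivot_unit_hom]

lemma tΩ_associativity (m : M) (x y : D) :
    (B.assocR m x y).hom ≫ B.tΩ PD m (x ⊗ y)
      = B.ractHom (B.tΩ PD m x) (𝟙 y) ≫ B.tΩ PD (B.ract m (PD.ddual x)) y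
          ≫ B.ddAssocR PD m x y := by
  rw [tΩ, tΩ, tΩ, ddAssocR, PD.pivot_tensor_inv, ractHom_id_comp, ractHom_comp_ractHom_assoc,
    Category.comp_id, Category.id_comp, ← Category.assoc, ← B.assocR_natural, Category.assoc]

lemma tΩ_unitality (m : M) : B.tΩ PD m (𝟙_ D) ≫ B.ddUnitR PD m = (B.unitR m).hom := by
  rw [tΩ, ddUnitR, ractHom_comp_ractHom_assoc, Category.id_comp, ← PD.pivot_unit_hom,
    Iso.inv_hom_id, ractHom_id, Category.id_comp]

lemma sΩ_tΩ_hexagon (x : C) (m : M) (d : D) :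
    B.tΩ PD (B.act (PC.ddual x) m) d ≫ (B.middle (PC.ddual x) m (PD.ddual d)).hom
        ≫ B.sΩ PC x (B.ract m (PD.ddual d))
      = B.ractHom (B.sΩ PC x m) (𝟙 d) ≫ (B.middle x m d).hom
          ≫ B.actHom (𝟙 x) (B.tΩ PD m d) := by
  rw [sΩ, sΩ, tΩ, tΩ, middle_natural_left, ← middle_natural_right, ractHom_comp_ractHom_assoc,
    ractHom_comp_ractHom_assoc, Category.comp_id, Category.id_comp, Category.comp_id,
    Category.id_comp]

end BimodCat

theorem doubleOpposite_identity_is_bimodule_equivalence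
    {C : Type*} [Category C] [MonoidalCategory C]
    {D : Type*} [Category D] [MonoidalCategory D]
    {M : Type*} [Category M]
    (B : BimodCat C D M) (PC : PivData C) (PD : PivData D) :
    -- `s` and `t` are isomorphisms (and the identity functor is an equivalence)
    (∀ (x : C) (m : M), IsIso (B.sΩ PC x m)) ∧
    (∀ (m : M) (d : D), IsIso (B.tΩ PD m d)) ∧
    -- naturality of `s` and `t`
    (∀ {x y : C} {m m' : M} (f : x ⟶ y) (g : m ⟶ m'),
      B.actHom (PC.ddualMap f) g ≫ B.sΩ PC y m' = B.sΩ PC x m ≫ B.actHom f g) ∧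
    (∀ {m m' : M} {x y : D} (g : m ⟶ m') (f : x ⟶ y),
      B.ractHom g f ≫ B.tΩ PD m' y = B.tΩ PD m x ≫ B.ractHom g (PD.ddualMap f)) ∧
    -- pentagon and triangle axioms for `s`
    (∀ (x y : C) (m : M),
      B.sΩ PC (x ⊗ y) m ≫ (B.assocL x y m).hom
        = B.ddAssocL PC x y m ≫ B.sΩ PC x (B.act (PC.ddual y) m)
            ≫ B.actHom (𝟙 x) (B.sΩ PC y m)) ∧
    (∀ m : M, B.sΩ PC (𝟙_ C) m ≫ (B.unitL m).hom = B.ddUnitL PC m) ∧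
    -- pentagon and triangle axioms for `t`
    (∀ (m : M) (x y : D),
      (B.assocR m x y).hom ≫ B.tΩ PD m (x ⊗ y)
        = B.ractHom (B.tΩ PD m x) (𝟙 y) ≫ B.tΩ PD (B.ract m (PD.ddual x)) y
            ≫ B.ddAssocR PD m x y) ∧
    (∀ m : M, B.tΩ PD m (𝟙_ D) ≫ B.ddUnitR PD m = (B.unitR m).hom) ∧
    -- hexagon axiom
    (∀ (x : C) (m : M) (d : D),
      B.tΩ PD (B.act (PC.ddual x) m) d ≫ (B.middle (PC.ddual x) m (PD.ddual d)).hom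
          ≫ B.sΩ PC x (B.ract m (PD.ddual d))
        = B.ractHom (B.sΩ PC x m) (𝟙 d) ≫ (B.middle x m d).hom
            ≫ B.actHom (𝟙 x) (B.tΩ PD m d)) :=
  ⟨B.isIso_sΩ PC, B.isIso_tΩ PD, B.sΩ_naturality PC, B.tΩ_naturality PD,
    B.sΩ_associativity PC, B.sΩ_unitality PC, B.tΩ_associativity PD, B.tΩ_unitality PD,
    B.sΩ_tΩ_hexagon PC PD⟩
end
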